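/- For every natural number s ≥ 1 and every p ≥ 1, the following identity of bivariate polynomials holds: F_{2ps}(x,y) = F_s(x,y) · Σ_{k=0}^{p-1} (-y)^{sk} L_{(2p-2k-1)s}(x,y). -/

import Mathlib

/-- Bivariate Fibonacci polynomials. -/
def bF {R : Type*} [CommRing R] (x y : R) : ℕ → R
  | 0 => 0
  | 1 => 1
  | n + 2 => x * bF x y (n + 1) + y * bF x y n

/-- Bivariate Lucas polynomials. -/
def bL {R : Type*} [CommRing R] (x y : R) : ℕ → R
  | 0 => 2
  | 1 => x
  | n + 2 => x * bL x y (n + 1) + y * bL x y n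

/-!
Both sides of `F_{m+2n} = L_{m+n} F_n + (-y)^n F_m` are built from solutions of the recurrence
`u_{k+2} = x u_{k+1} + y u_k`, and the identity follows by induction on `n` from a d'Ocagne-type
identity `u_{k+n+1} F_n - u_{k+n} F_{n+1} = -(-y)^n u_k`, valid for every solution `u`.
Taking `m = 2ps`, `n = s` gives `F_{2(p+1)s} = L_{(2p+1)s} F_s + (-y)^s F_{2ps}`, which unrolls
to the sum.
-/

section

variable {R : Type*} [CommRing R] (x y : R)

theorem bF_add_two (n : ℕ) : bF x y (n + 2) = x * bF x y (n + 1) + y * bF x y n := rfl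

theorem bL_add_two (n : ℕ) : bL x y (n + 2) = x * bL x y (n + 1) + y * bL x y n := rfl

theorem bL_succ (n : ℕ) : bL x y (n + 1) = bF x y (n + 2) + y * bF x y n := by
  induction n using Nat.twoStepInduction with
  | zero => simp [bL, bF]
  | one => simp only [bL, bF]; ring
  | more n ih₀ ih₁ =>
    rw [bL_add_two, ih₀, ih₁, bF_add_two x y (n + 2), show n + 2 + 1 = n + 1 + 2 from rfl]
    linear_combination (-y) * bF_add_two x y n

theorem sub_mul_bF_eq_of_recurrence (u : ℕ → R)
    (hu : ∀ n, u (n + 2) = x * u (n + 1) + y * u n) (k n : ℕ) :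
    u (k + n + 1) * bF x y n - u (k + n) * bF x y (n + 1) = -(-y) ^ n * u k := by
  induction n with
  | zero => simp [bF]
  | succ n ih =>
    rw [← add_assoc, hu, bF_add_two, pow_succ]
    linear_combination (-y) * ih

theorem bF_add_two_mul (m n : ℕ) :
    bF x y (m + 2 * n) = bL x y (m + n) * bF x y n + (-y) ^ n * bF x y m := by
  induction n generalizing m with
  | zero => simp [bF]
  | succ n ih =>
    have dOcagne := sub_mul_bF_eq_of_recurrence x y (bL x y) (bL_add_two x y) (m + 1) n
    rw [show m + 2 * (n + 1) = m + 2 + 2 * n by ring, ih, show m + 2 + n = m + 1 + n + 1 by ring,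
      show m + (n + 1) = m + 1 + n by ring]
    linear_combination dOcagne - (-y) ^ n * bL_succ x y m

end

theorem fib_even_multiple_over_fib_general {R : Type*} [CommRing R] (x y : R)
    (s p : ℕ) :
    bF x y (2 * p * s) =
      bF x y s * ∑ k ∈ Finset.range p, (-y) ^ (s * k) * bL x y ((2 * p - 2 * k - 1) * s) := by
  induction p with
  | zero => simp [bF]
  | succ p ih =>
    have shift : ∀ k ∈ Finset.range p,
        (-y) ^ (s * (k + 1)) * bL x y ((2 * (p + 1) - 2 * (k + 1) - 1) * s) =
          (-y) ^ s * ((-y) ^ (s * k) * bL x y ((2 * p - 2 * k - 1) * s)) := by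
      intro k _
      rw [show 2 * (p + 1) - 2 * (k + 1) - 1 = 2 * p - 2 * k - 1 by omega, mul_add_one, pow_add]
      ring
    have leading_index : (2 * (p + 1) - 2 * 0 - 1) * s = 2 * p * s + s := by
      rw [show 2 * (p + 1) - 2 * 0 - 1 = 2 * p + 1 by omega]
      ring
    rw [Finset.sum_range_succ', Finset.sum_congr rfl shift, ← Finset.mul_sum, leading_index,
      show 2 * (p + 1) * s = 2 * p * s + 2 * s by ring, bF_add_two_mul, ih]
    ring

/-- F_{2ps} = F_s · Σ_{k=0}^{p-1} (-y)^{sk} L_{(2p-2k-1)s}. -/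
theorem fib_even_multiple_over_fib {R : Type*} [CommRing R] (x y : R)
    (s p : ℕ) (hs : 1 ≤ s) (hp : 1 ≤ p) :
    bF x y (2 * p * s) =
      bF x y s * ∑ k ∈ Finset.range p, (-y) ^ (s * k) * bL x y ((2 * p - 2 * k - 1) * s) :=
  fib_even_multiple_over_fib_general x y s p
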